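/- arXiv:1203.1108 — 2 statements merged into one kernel-verified Lean document; each statement's English description precedes it below -/
import Mathlib

section
/- Let k be an algebraically closed field and let σ₁, σ₂ ∈ k[t] be nonconstant tamely ramified polynomials with deg σ₁ > deg σ₂. If ω = f·(dt)^ν is a semi-invariant form of weight ν ∈ ℤ for (σ₁, σ₂), then the sum of the orders of f over all points of the affine line equals −ν: Σ_{a ∈ k} ord_a f = −ν. -/
/-!
Over an algebraically closed field the total order `∑ₐ ord_a f` is the degree
`deg f = deg (num f) - deg (denom f)`. Substituting `σ` multiplies degrees by `deg σ`, and
tameness (`char k ∤ deg σ`) gives `deg σ' = deg σ - 1`, so `σ*(f·(dt)^ν)` has degree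
`(deg f + ν)·deg σ - ν`. Semi-invariance equates this for `σ₁` and `σ₂`, and
`deg σ₁ ≠ deg σ₂` forces `deg f + ν = 0`.
-/

open Polynomial

/-- Substitution of a polynomial `σ` into a rational function `h`:
if `h = p/q` then `h ∘ σ = (p ∘ σ)/(q ∘ σ)`. -/
noncomputable def ratComp {k : Type*} [Field k] (h : RatFunc k) (σ : k[X]) : RatFunc k :=
  algebraMap k[X] (RatFunc k) (h.num.comp σ) / algebraMap k[X] (RatFunc k) (h.denom.comp σ)

/-- The order of a rational function `f` at a point `a` of the affine line. -/
noncomputable def ordAt {k : Type*} [Field k] (f : RatFunc k) (a : k) : ℤ :=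
  (f.num.rootMultiplicity a : ℤ) - (f.denom.rootMultiplicity a : ℤ)

/-- `f·(dt)^ν` is a semi-invariant form of weight `ν` for the correspondence `(σ₁, σ₂)`
of the affine line: `f ≠ 0` and `σ₁*ω = λ·σ₂*ω` for some constant `λ ≠ 0`, i.e.
`(f∘σ₁)·(σ₁')^ν = λ·(f∘σ₂)·(σ₂')^ν`. -/
def SemiInvariant {k : Type*} [Field k] (σ₁ σ₂ : k[X]) (f : RatFunc k) (ν : ℤ) : Prop :=
  f ≠ 0 ∧ ∃ lam : k, lam ≠ 0 ∧
    ratComp f σ₁ * (algebraMap k[X] (RatFunc k) (derivative σ₁)) ^ ν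
      = RatFunc.C lam *
        (ratComp f σ₂ * (algebraMap k[X] (RatFunc k) (derivative σ₂)) ^ ν)

/-- A nonconstant polynomial `σ` is tamely ramified if `char k` does not divide its degree
and every root of `σ - c`, for every `c`, has multiplicity prime to `char k`. -/
def TamelyRamified {k : Type*} [Field k] (σ : k[X]) : Prop :=
  ¬ (ringChar k ∣ σ.natDegree) ∧
    ∀ c a : k, (σ - C c).IsRoot a → ¬ (ringChar k ∣ (σ - C c).rootMultiplicity a)

namespace Polynomial

variable {k : Type*} [Field k]

theorem sum_rootMultiplicity_eq_natDegree [IsAlgClosed k] [DecidableEq k] {p : k[X]}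
    {s : Finset k} (hs : ∀ a ∈ p.roots, a ∈ s) :
    ∑ a ∈ s, p.rootMultiplicity a = p.natDegree := by
  simp_rw [← count_roots]
  rw [Multiset.sum_count_eq_card hs, IsAlgClosed.card_roots_eq_natDegree]

theorem comp_ne_zero_of_natDegree_pos {p σ : k[X]} (hp : p ≠ 0) (hσ : 0 < σ.natDegree) :
    p.comp σ ≠ 0 := by
  rintro hpσ
  rcases comp_eq_zero_iff.1 hpσ with hp0 | ⟨-, hσC⟩
  · exact hp hp0
  · rw [hσC, natDegree_C] at hσ
    exact hσ.false

theorem coeff_derivative_natDegree_sub_one_ne_zero {p : k[X]} (hp : 0 < p.natDegree)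
    (hchar : ¬ ringChar k ∣ p.natDegree) : (derivative p).coeff (p.natDegree - 1) ≠ 0 := by
  rw [coeff_derivative, Nat.sub_add_cancel hp, ← Nat.cast_succ, Nat.succ_eq_add_one,
    Nat.sub_add_cancel hp]
  refine mul_ne_zero (leadingCoeff_ne_zero.2 (ne_zero_of_natDegree_gt hp)) ?_
  rwa [Ne, CharP.cast_eq_zero_iff k (ringChar k)]

theorem natDegree_derivative_of_not_ringChar_dvd {p : k[X]} (hp : 0 < p.natDegree)
    (hchar : ¬ ringChar k ∣ p.natDegree) : (derivative p).natDegree = p.natDegree - 1 :=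
  (natDegree_derivative_le p).antisymm
    (le_natDegree_of_ne_zero (coeff_derivative_natDegree_sub_one_ne_zero hp hchar))

end Polynomial

namespace RatFunc

variable {k : Type*} [Field k]

theorem intDegree_pow (x : RatFunc k) (n : ℕ) : (x ^ n).intDegree = n * x.intDegree := by
  rcases eq_or_ne x 0 with rfl | hx
  · rcases n with _ | n <;> simp
  induction n with
  | zero => simp
  | succ n ih => rw [pow_succ, intDegree_mul (pow_ne_zero n hx) hx, ih]; push_cast; ring

theorem intDegree_zpow (x : RatFunc k) (n : ℤ) : (x ^ n).intDegree = n * x.intDegree := by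
  obtain ⟨n, rfl | rfl⟩ := n.eq_nat_or_neg
  · rw [zpow_natCast, intDegree_pow]
  · rw [zpow_neg, intDegree_inv, zpow_natCast, intDegree_pow]; ring

theorem intDegree_C_mul {c : k} (hc : c ≠ 0) (x : RatFunc k) :
    (C c * x).intDegree = x.intDegree := by
  rcases eq_or_ne x 0 with rfl | hx
  · simp
  · rw [intDegree_mul (by simpa using hc) hx, intDegree_C, zero_add]

end RatFunc

section

variable {k : Type*} [Field k]

theorem ratComp_ne_zero {f : RatFunc k} {σ : k[X]} (hf : f ≠ 0) (hσ : 0 < σ.natDegree) :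
    ratComp f σ ≠ 0 :=
  div_ne_zero
    (RatFunc.algebraMap_ne_zero (comp_ne_zero_of_natDegree_pos (RatFunc.num_ne_zero hf) hσ))
    (RatFunc.algebraMap_ne_zero (comp_ne_zero_of_natDegree_pos f.denom_ne_zero hσ))

theorem intDegree_ratComp {f : RatFunc k} {σ : k[X]} (hf : f ≠ 0) (hσ : 0 < σ.natDegree) :
    (ratComp f σ).intDegree = f.intDegree * σ.natDegree := by
  rw [ratComp, RatFunc.intDegree_div
      (RatFunc.algebraMap_ne_zero (comp_ne_zero_of_natDegree_pos (RatFunc.num_ne_zero hf) hσ))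
      (RatFunc.algebraMap_ne_zero (comp_ne_zero_of_natDegree_pos f.denom_ne_zero hσ)),
    RatFunc.intDegree_polynomial, RatFunc.intDegree_polynomial, natDegree_comp, natDegree_comp,
    RatFunc.intDegree]
  push_cast
  ring

theorem finsum_ordAt_eq_intDegree [IsAlgClosed k] (f : RatFunc k) :
    ∑ᶠ a : k, ordAt f a = f.intDegree := by
  classical
  set s := f.num.roots.toFinset ∪ f.denom.roots.toFinset
  have hsupp : Function.support (ordAt f) ⊆ s := by
    intro a ha
    by_contra has
    simp only [s, Finset.coe_union, Set.mem_union, Finset.mem_coe, Multiset.mem_toFinset,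
      not_or] at has
    simp [ordAt, ← count_roots, Multiset.count_eq_zero.2 has.1,
      Multiset.count_eq_zero.2 has.2] at ha
  rw [finsum_eq_sum_of_support_subset _ hsupp]
  simp only [ordAt, Finset.sum_sub_distrib, ← Nat.cast_sum]
  rw [sum_rootMultiplicity_eq_natDegree (fun a ha => by simp [s, ha]),
    sum_rootMultiplicity_eq_natDegree (fun a ha => by simp [s, ha])]
  rfl

/-- `σ*(f·(dt)^ν) = pullbackCoeff σ f ν · (dt)^ν`. -/
noncomputable def pullbackCoeff (σ : k[X]) (f : RatFunc k) (ν : ℤ) : RatFunc k :=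
  ratComp f σ * (algebraMap k[X] (RatFunc k) (derivative σ)) ^ ν

theorem intDegree_pullbackCoeff {σ : k[X]} {f : RatFunc k} (hf : f ≠ 0)
    (hσ : 0 < σ.natDegree) (hchar : ¬ ringChar k ∣ σ.natDegree) (ν : ℤ) :
    (pullbackCoeff σ f ν).intDegree = (f.intDegree + ν) * σ.natDegree - ν := by
  have hσ' : derivative σ ≠ 0 := fun h =>
    coeff_derivative_natDegree_sub_one_ne_zero hσ hchar (by rw [h, coeff_zero])
  rw [pullbackCoeff, RatFunc.intDegree_mul (ratComp_ne_zero hf hσ)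
      (zpow_ne_zero _ (RatFunc.algebraMap_ne_zero hσ')),
    intDegree_ratComp hf hσ, RatFunc.intDegree_zpow, RatFunc.intDegree_polynomial,
    natDegree_derivative_of_not_ringChar_dvd hσ hchar, Nat.cast_sub hσ]
  push_cast
  ring

end

theorem sum_ord_semiInvariant_eq_neg_weight_general
    {k : Type*} [Field k] [IsAlgClosed k] (σ₁ σ₂ : k[X])
    (h₂ : 0 < σ₂.natDegree)
    (ht₁ : TamelyRamified σ₁) (ht₂ : TamelyRamified σ₂)
    (hdeg : σ₂.natDegree < σ₁.natDegree)
    (ν : ℤ) (f : RatFunc k) (hf : SemiInvariant σ₁ σ₂ f ν) :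
    ∑ᶠ a : k, ordAt f a = -ν := by
  obtain ⟨hf0, lam, hlam, hpull⟩ := hf
  have hdeg_pull :
      (f.intDegree + ν) * σ₁.natDegree - ν = (f.intDegree + ν) * σ₂.natDegree - ν := by
    rw [← intDegree_pullbackCoeff hf0 (h₂.trans hdeg) ht₁.1,
      ← intDegree_pullbackCoeff hf0 h₂ ht₂.1,
      ← RatFunc.intDegree_C_mul hlam (pullbackCoeff σ₂ f ν)]
    exact congrArg RatFunc.intDegree hpull
  have hsum : f.intDegree + ν = 0 := by
    by_contra hne
    exact hdeg.ne' (by exact_mod_cast mul_left_cancel₀ hne (sub_left_inj.1 hdeg_pull))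
  rw [finsum_ordAt_eq_intDegree]
  omega

/-- for a semi-invariant form `f·(dt)^ν` of a correspondence of the affine line
by tamely ramified polynomials of unequal degrees, the total order of `f` is `-ν`. -/
theorem sum_ord_semiInvariant_eq_neg_weight
    {k : Type*} [Field k] [IsAlgClosed k] (σ₁ σ₂ : k[X])
    (h₁ : 0 < σ₁.natDegree) (h₂ : 0 < σ₂.natDegree)
    (ht₁ : TamelyRamified σ₁) (ht₂ : TamelyRamified σ₂)
    (hdeg : σ₂.natDegree < σ₁.natDegree)
    (ν : ℤ) (f : RatFunc k) (hf : SemiInvariant σ₁ σ₂ f ν) :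
    ∑ᶠ a : k, ordAt f a = -ν :=
  sum_ord_semiInvariant_eq_neg_weight_general σ₁ σ₂ h₂ ht₁ ht₂ hdeg ν f hf
end

section
/- Let k be an algebraically closed field and let σ₁, σ₂ ∈ k[t] be nonconstant tamely ramified polynomials such that σ₁′·σ₂ = l·σ₂′·σ₁ in k[t] for some l ∈ k∖{0}. Then there exist distinct points α₁, …, α_n ∈ k, positive integers e₁, …, e_n and f₁, …, f_n, and constants λ₁, λ₂ ∈ k∖{0} such that σ₁(t) = λ₁·∏_{i=1}^n (t − α_i)^{e_i} and σ₂(t) = λ₂·∏_{i=1}^n (t − α_i)^{f_i}. -/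
open Polynomial

theorem Finset.exists_fin_enumeration {ι M : Type*} [CommMonoid M] (S : Finset ι) :
    ∃ (n : ℕ) (α : Fin n → ι), Function.Injective α ∧ (∀ i, α i ∈ S) ∧
      ∀ f : ι → M, ∏ i, f (α i) = ∏ a ∈ S, f a :=
  ⟨S.card, fun i => S.equivFin.symm i, Subtype.val_injective.comp S.equivFin.symm.injective,
    fun i => (S.equivFin.symm i).2, fun f => by
      rw [← S.prod_coe_sort]
      exact Equiv.prod_comp S.equivFin.symm fun a => f a⟩

namespace Polynomial

theorem Splits.eq_C_leadingCoeff_mul_prod_pow_rootMultiplicity {R : Type*} [CommRing R]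
    [IsDomain R] [DecidableEq R] {p : R[X]} (hp : p.Splits) :
    p = C p.leadingCoeff * ∏ a ∈ p.roots.toFinset, (X - C a) ^ rootMultiplicity a p := by
  rw [← prod_multiset_root_eq_finset_root]
  exact hp.eq_prod_roots

theorem derivative_ne_zero_of_natDegree_cast_ne_zero {R : Type*} [Semiring R]
    [NoZeroDivisors R] {p : R[X]} (h : (p.natDegree : R) ≠ 0) : derivative p ≠ 0 := by
  have hdeg : p.natDegree ≠ 0 := fun h0 => h (by simp [h0])
  have hp : p ≠ 0 := fun h0 => hdeg (by simp [h0])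
  intro h0
  have hc := congrArg (coeff · (p.natDegree - 1)) h0
  simp only [coeff_derivative, coeff_zero, ← Nat.cast_add_one, Nat.sub_one_add_one hdeg] at hc
  exact mul_ne_zero (leadingCoeff_ne_zero.2 hp) h hc

/-- Comparing orders at `a` gives `e ≤ (e - 1) + ord_a τ`. -/
theorem isRoot_of_dvd_derivative_mul {R : Type*} [CommRing R] [IsDomain R] {σ τ : R[X]}
    {a : R} (ha : σ.IsRoot a) (hmult : (σ.rootMultiplicity a : R) ≠ 0)
    (hσ' : derivative σ ≠ 0) (hτ : τ ≠ 0) (hdvd : σ ∣ derivative σ * τ) : τ.IsRoot a := by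
  have hσ : σ ≠ 0 := fun h0 => hσ' (by simp [h0])
  have hpos : 0 < σ.rootMultiplicity a := (rootMultiplicity_pos hσ).2 ha
  have hle := rootMultiplicity_le_rootMultiplicity_of_dvd (mul_ne_zero hσ' hτ) hdvd a
  rw [rootMultiplicity_mul (mul_ne_zero hσ' hτ),
    derivative_rootMultiplicity_of_root_of_mem_nonZeroDivisors ha
      (mem_nonZeroDivisors_of_ne_zero hmult)] at hle
  exact (rootMultiplicity_pos hτ).1 (by omega)

end Polynomial

namespace TamelyRamified

variable {k : Type*} [Field k] {σ : k[X]}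

theorem natDegree_pos (hσ : TamelyRamified σ) : 0 < σ.natDegree :=
  Nat.pos_of_ne_zero fun h0 => hσ.1 (h0 ▸ dvd_zero _)

theorem ne_zero (hσ : TamelyRamified σ) : σ ≠ 0 :=
  ne_zero_of_natDegree_gt hσ.natDegree_pos

theorem derivative_ne_zero (hσ : TamelyRamified σ) : derivative σ ≠ 0 :=
  derivative_ne_zero_of_natDegree_cast_ne_zero fun h0 => hσ.1 ((ringChar.spec k _).1 h0)

theorem cast_rootMultiplicity_ne_zero (hσ : TamelyRamified σ) {a : k} (ha : σ.IsRoot a) :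
    (σ.rootMultiplicity a : k) ≠ 0 := by
  have h := hσ.2 0 a
  rw [map_zero, sub_zero] at h
  exact fun h0 => h ha ((ringChar.spec k _).1 h0)

theorem isRoot_of_dvd_derivative_mul (hσ : TamelyRamified σ) {τ : k[X]} (hτ : τ ≠ 0)
    (hdvd : σ ∣ derivative σ * τ) {a : k} (ha : σ.IsRoot a) : τ.IsRoot a :=
  Polynomial.isRoot_of_dvd_derivative_mul ha (hσ.cast_rootMultiplicity_ne_zero ha)
    hσ.derivative_ne_zero hτ hdvd

end TamelyRamified

theorem common_factorisation_of_flat_semiInvariant_general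
    {k : Type*} [Field k] [IsAlgClosed k] (σ₁ σ₂ : k[X])
    (ht₁ : TamelyRamified σ₁) (ht₂ : TamelyRamified σ₂)
    (l : k) (hl : l ≠ 0)
    (heq : derivative σ₁ * σ₂ = C l * (derivative σ₂ * σ₁)) :
    ∃ (n : ℕ) (α : Fin n → k) (e f : Fin n → ℕ) (lam₁ lam₂ : k),
      Function.Injective α ∧ (∀ i, 0 < e i) ∧ (∀ i, 0 < f i) ∧
      lam₁ ≠ 0 ∧ lam₂ ≠ 0 ∧
      σ₁ = C lam₁ * ∏ i, (X - C (α i)) ^ (e i) ∧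
      σ₂ = C lam₂ * ∏ i, (X - C (α i)) ^ (f i) := by
  classical
  have hdvd₁ : σ₁ ∣ derivative σ₁ * σ₂ := by
    rw [heq, ← mul_assoc]
    exact dvd_mul_left _ _
  have hdvd₂ : σ₂ ∣ derivative σ₂ * σ₁ := by
    rw [show derivative σ₂ * σ₁ = C l⁻¹ * (derivative σ₁ * σ₂) by
      rw [heq, ← mul_assoc, ← C_mul, inv_mul_cancel₀ hl, C_1, one_mul]]
    exact (dvd_mul_left _ _).mul_left _
  have hroots : σ₂.roots.toFinset = σ₁.roots.toFinset := by
    ext a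
    simp only [Multiset.mem_toFinset, mem_roots ht₁.ne_zero, mem_roots ht₂.ne_zero]
    exact ⟨ht₂.isRoot_of_dvd_derivative_mul ht₁.ne_zero hdvd₂,
      ht₁.isRoot_of_dvd_derivative_mul ht₂.ne_zero hdvd₁⟩
  obtain ⟨n, α, hα, hmem, hprod⟩ := σ₁.roots.toFinset.exists_fin_enumeration (M := k[X])
  have hpos {p : k[X]} {a : k} (ha : a ∈ p.roots.toFinset) : 0 < rootMultiplicity a p :=
    rootMultiplicity_pos'.2 (mem_roots'.1 (Multiset.mem_toFinset.1 ha))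
  refine ⟨n, α, fun i => rootMultiplicity (α i) σ₁, fun i => rootMultiplicity (α i) σ₂,
    σ₁.leadingCoeff, σ₂.leadingCoeff, hα, fun i => hpos (hmem i),
    fun i => hpos (hroots ▸ hmem i), leadingCoeff_ne_zero.2 ht₁.ne_zero,
    leadingCoeff_ne_zero.2 ht₂.ne_zero, ?_, ?_⟩
  · rw [hprod fun a => (X - C a) ^ rootMultiplicity a σ₁]
    exact (IsAlgClosed.splits σ₁).eq_C_leadingCoeff_mul_prod_pow_rootMultiplicity
  · rw [hprod fun a => (X - C a) ^ rootMultiplicity a σ₂, ← hroots]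
    exact (IsAlgClosed.splits σ₂).eq_C_leadingCoeff_mul_prod_pow_rootMultiplicity

/-- if `σ₁'·σ₂ = l·σ₂'·σ₁` for some nonzero constant `l`, with `σ₁, σ₂`
nonconstant tamely ramified polynomials over an algebraically closed field, then `σ₁` and
`σ₂` factor as `σ₁ = λ₁·∏ (t − αᵢ)^{eᵢ}` and `σ₂ = λ₂·∏ (t − αᵢ)^{fᵢ}` over a common set of
distinct points `α₁, …, α_n`, with all exponents positive. -/
theorem common_factorisation_of_flat_semiInvariant
    {k : Type*} [Field k] [IsAlgClosed k] (σ₁ σ₂ : k[X])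
    (h₁ : 0 < σ₁.natDegree) (h₂ : 0 < σ₂.natDegree)
    (ht₁ : TamelyRamified σ₁) (ht₂ : TamelyRamified σ₂)
    (l : k) (hl : l ≠ 0)
    (heq : derivative σ₁ * σ₂ = C l * (derivative σ₂ * σ₁)) :
    ∃ (n : ℕ) (α : Fin n → k) (e f : Fin n → ℕ) (lam₁ lam₂ : k),
      Function.Injective α ∧ (∀ i, 0 < e i) ∧ (∀ i, 0 < f i) ∧
      lam₁ ≠ 0 ∧ lam₂ ≠ 0 ∧
      σ₁ = C lam₁ * ∏ i, (X - C (α i)) ^ (e i) ∧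
      σ₂ = C lam₂ * ∏ i, (X - C (α i)) ^ (f i) :=
  common_factorisation_of_flat_semiInvariant_general σ₁ σ₂ ht₁ ht₂ l hl heq
end
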